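/- Transitivity of the classical change-of-reference-frame map: Let G be a group, n ≥ 3, and i, j, k pairwise distinct indices in {0,…,n−1}. Then σ^{i→j} ∘ σ^{k→i} = σ^{k→j} as maps G^n → G^n. -/
import Mathlib


/-- The classical change-of-reference-frame map `σ^{a→b}` on configurations. -/
def chgFrame {G : Type*} [Group G] {n : ℕ} (a b : Fin n) (f : Fin n → G) : Fin n → G :=
  fun k => if k = b then f a else if k = a then (f b)⁻¹ else f k * (f b)⁻¹

/-- Transitivity of the classical change-of-reference-frame map:
`σ^{i→j} ∘ σ^{k→i} = σ^{k→j}`. -/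
theorem chgFrame_trans (G : Type*) [Group G] {n : ℕ} (hn : 3 ≤ n)
    (i j k : Fin n) (hij : i ≠ j) (hjk : j ≠ k) (hik : i ≠ k) :
    chgFrame (G := G) i j ∘ chgFrame k i = chgFrame (G := G) k j := by
  funext f x
  simp only [Function.comp_apply, chgFrame]
  by_cases hxj : x = j <;> by_cases hxi : x = i <;> by_cases hxk : x = k <;>
    simp_all [hij, hjk, hik, hij.symm, hjk.symm, hik.symm, mul_assoc]
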